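/- Let b ≥ 2 be an integer and c > 0 a real number. Define D_b(c) = 1 + (b/((b−1)·c))·log(b/(1 + (b−1)·exp(−c))) − 2·b·exp(−c)/(1 + (b−1)·exp(−c)). Then 0 < 1/D_b(c) < ((1 + (b−1)·exp(−c))/(1 − exp(−c)))². -/

import Mathlib

/-- The quantity `D_b(c) = 1 + (b/((b−1)c))·log(b/(1+(b−1)e^{−c})) − 2be^{−c}/(1+(b−1)e^{−c})`. -/
noncomputable def Dconst (b : ℕ) (c : ℝ) : ℝ :=
  1 + ((b : ℝ) / (((b : ℝ) - 1) * c)) *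
      Real.log ((b : ℝ) / (1 + ((b : ℝ) - 1) * Real.exp (-c))) -
    2 * (b : ℝ) * Real.exp (-c) / (1 + ((b : ℝ) - 1) * Real.exp (-c))

private lemma psi_hasDerivAt (a : ℝ) (ha : 0 < a) (y : ℝ) (hy : 0 < y) :
    HasDerivAt (fun t => Real.log (1 + a) - Real.log (1 + a * t)
        + Real.log t * (a * t / (1 + a * t)))
      (a * Real.log y / (1 + a * y) ^ 2) y := by
  have hs : 0 < 1 + a * y := by positivity
  have h1 : HasDerivAt (fun t : ℝ => 1 + a * t) a y := by
    simpa using ((hasDerivAt_id y).const_mul a).const_add 1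
  have h2 : HasDerivAt (fun t => Real.log (1 + a * t)) ((1 + a * y)⁻¹ * a) y :=
    by have := (Real.hasDerivAt_log hs.ne').comp y h1; exact this
  have hnum : HasDerivAt (fun t : ℝ => a * t) a y := by
    simpa using (hasDerivAt_id y).const_mul a
  have h4 : HasDerivAt (fun t : ℝ => a * t / (1 + a * t))
      ((a * (1 + a * y) - a * y * a) / (1 + a * y) ^ 2) y := hnum.div h1 hs.ne'
  have h5 := (Real.hasDerivAt_log hy.ne').mul h4
  have h6 := ((hasDerivAt_const y (Real.log (1 + a))).sub h2).add h5
  refine h6.congr_deriv ?_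
  have hlog := Real.log y
  have hy' := hy.ne'
  have hs' := hs.ne'
  field_simp
  ring

private lemma psi_pos (a x : ℝ) (ha : 0 < a) (hx0 : 0 < x) (hx1 : x < 1) :
    0 < Real.log (1 + a) - Real.log (1 + a * x) + Real.log x * (a * x / (1 + a * x)) := by
  set f : ℝ → ℝ := fun t => Real.log (1 + a) - Real.log (1 + a * t)
      + Real.log t * (a * t / (1 + a * t)) with hf
  have hanti : StrictAntiOn f (Set.Icc x 1) := by
    apply strictAntiOn_of_deriv_neg (convex_Icc x 1)
    · intro y hy
      have hy0 : 0 < y := lt_of_lt_of_le hx0 hy.1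
      exact (psi_hasDerivAt a ha y hy0).continuousAt.continuousWithinAt
    · intro y hy
      rw [interior_Icc] at hy
      have hy0 : 0 < y := lt_trans hx0 hy.1
      have hy1 : y < 1 := hy.2
      rw [(psi_hasDerivAt a ha y hy0).deriv]
      have hlog : Real.log y < 0 := Real.log_neg hy0 hy1
      have hs : 0 < 1 + a * y := by positivity
      have : 0 < (1 + a * y) ^ 2 := by positivity
      exact div_neg_of_neg_of_pos (by nlinarith) this
  have h1 : f 1 < f x := by
    apply hanti (Set.left_mem_Icc.2 hx1.le) (Set.right_mem_Icc.2 hx1.le) hx1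
  have hf1 : f 1 = 0 := by simp [hf]
  rw [hf1] at h1
  exact h1

/-- Let `b ≥ 2` be an integer and `c > 0`. Then
`0 < 1/D_b(c) < ((1+(b−1)e^{−c})/(1−e^{−c}))²` (in particular `D_b(c) > 0`). -/
theorem Dconst_reciprocal_bounds (b : ℕ) (hb : 2 ≤ b) (c : ℝ) (hc : 0 < c) :
    0 < 1 / Dconst b c ∧
      1 / Dconst b c <
        ((1 + ((b : ℝ) - 1) * Real.exp (-c)) / (1 - Real.exp (-c))) ^ 2 := by
  set x : ℝ := Real.exp (-c) with hxdef
  have hx0 : 0 < x := Real.exp_pos _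
  have hx1 : x < 1 := by
    rw [hxdef, Real.exp_lt_one_iff]
    linarith
  set a : ℝ := (b : ℝ) - 1 with hadef
  have hb2 : (2 : ℝ) ≤ (b : ℝ) := by exact_mod_cast hb
  have ha1 : 1 ≤ a := by simp [hadef]; linarith
  have ha0 : 0 < a := by linarith
  have hbe : (b : ℝ) = 1 + a := by rw [hadef]; ring
  set s : ℝ := 1 + a * x with hsdef
  have hs1 : 1 < s := by rw [hsdef]; nlinarith
  have hs0 : 0 < s := by linarith
  have hb0 : (0 : ℝ) < (b : ℝ) := by linarith
  -- key log inequality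
  have hpsi := psi_pos a x ha0 hx0 hx1
  have hlogx : Real.log x = -c := by rw [hxdef, Real.log_exp]
  have hkey : c * (a * x / s) < Real.log ((b : ℝ) / s) := by
    rw [Real.log_div hb0.ne' hs0.ne', hbe]
    rw [hlogx] at hpsi
    rw [hsdef] at *
    linarith
  -- lower bound on Dconst
  have hD : (1 - x) / s < Dconst b c := by
    have hfactor : 0 < (b : ℝ) / (a * c) := by positivity
    have hmul : ((b : ℝ) / (a * c)) * (c * (a * x / s)) <
        ((b : ℝ) / (a * c)) * Real.log ((b : ℝ) / s) :=
      (mul_lt_mul_iff_right₀ hfactor).2 hkey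
    have hsimp : ((b : ℝ) / (a * c)) * (c * (a * x / s)) = (b : ℝ) * x / s := by
      field_simp
    have hDe : Dconst b c = 1 + ((b : ℝ) / (a * c)) * Real.log ((b : ℝ) / s)
        - 2 * (b : ℝ) * x / s := by
      rw [Dconst, hadef, hsdef, hxdef]
    rw [hDe]
    have hrhs : (1 - x) / s = 1 + (b : ℝ) * x / s - 2 * (b : ℝ) * x / s := by
      rw [hbe]
      field_simp
      ring
    rw [hrhs]
    linarith [hsimp ▸ hmul]
  have hDpos : 0 < Dconst b c := lt_trans (div_pos (by linarith) hs0) hD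
  refine ⟨one_div_pos.2 hDpos, ?_⟩
  have h1 : 1 / Dconst b c < s / (1 - x) := by
    rw [div_lt_div_iff₀ hDpos (by linarith : (0:ℝ) < 1 - x)]
    have h := (div_lt_iff₀ hs0).1 hD
    nlinarith
  have h2 : (1 : ℝ) < s / (1 - x) := by
    rw [lt_div_iff₀ (by linarith : (0:ℝ) < 1 - x)]
    linarith
  calc 1 / Dconst b c < s / (1 - x) := h1
  _ ≤ (s / (1 - x)) ^ 2 := by nlinarith
  _ = ((1 + ((b : ℝ) - 1) * Real.exp (-c)) / (1 - Real.exp (-c))) ^ 2 := by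
      rw [hsdef, hadef, hxdef]
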